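/- arXiv:1404.0628 — 6 statements merged into one kernel-verified Lean document; each statement's English description precedes it below -/
import Mathlib

section
/- Let (M, /, e) be a division structure satisfying L1, L2 and L3. Then M admits a group structure whose multiplication is x * y = x/(e/y), whose identity element is e, and whose inversion is x⁻¹ = e/x; moreover, in this group x * y⁻¹ = x/y for all x, y. -/
/-! Taking `z = x` in L3 gives `e/(y/x) = x/y`, hence `e/(e/x) = x`: this is the left unit law,
and it turns `x * y⁻¹` back into `x/y`. Associativity is L3 at the point `x = e/b`, and the left
inverse law is L1. -/

structure IsDivisionStructure {M : Type*} (dv : M → M → M) (e : M) : Prop where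
  div_self : ∀ x, dv x x = e
  div_unit : ∀ x, dv x e = x
  div_div_div_right : ∀ x y z, dv (dv z x) (dv y x) = dv z y

namespace IsDivisionStructure

variable {M : Type*} {dv : M → M → M} {e : M}

theorem unit_div_div (h : IsDivisionStructure dv e) (x y : M) : dv e (dv y x) = dv x y := by
  simpa only [h.div_self] using h.div_div_div_right x y x

theorem unit_div_unit_div (h : IsDivisionStructure dv e) (x : M) : dv e (dv e x) = x := by
  rw [h.unit_div_div, h.div_unit]

theorem div_div_unit_div (h : IsDivisionStructure dv e) (x z : M) :
    dv (dv z x) (dv e x) = z := by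
  rw [h.div_div_div_right, h.div_unit]

theorem mul_assoc (h : IsDivisionStructure dv e) (a b c : M) :
    dv (dv a (dv e b)) (dv e c) = dv a (dv e (dv b (dv e c))) := by
  calc dv (dv a (dv e b)) (dv e c)
      = dv (dv a (dv e b)) (dv (dv (dv e c) b) (dv e b)) := by rw [h.div_div_unit_div]
    _ = dv a (dv (dv e c) b) := h.div_div_div_right _ _ _
    _ = dv a (dv e (dv b (dv e c))) := by rw [h.unit_div_div]

abbrev toGroup (h : IsDivisionStructure dv e) : Group M :=
  letI : Mul M := ⟨fun x y => dv x (dv e y)⟩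
  letI : One M := ⟨e⟩
  letI : Inv M := ⟨dv e⟩
  Group.ofLeftAxioms h.mul_assoc h.unit_div_unit_div fun a => h.div_self (dv e a)

end IsDivisionStructure

/-- A division structure `(M, /, e)` satisfying L1, L2, L3 yields a group
structure on `M` with `x * y = x/(e/y)`, identity `e`, inverse `x⁻¹ = e/x`; moreover in
this group `x * y⁻¹ = x/y`. -/
theorem division_structure_group {M : Type*} (dv : M → M → M) (e : M)
    (L1 : ∀ x, dv x x = e) (L2 : ∀ x, dv x e = x)
    (L3 : ∀ x y z, dv (dv z x) (dv y x) = dv z y) :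
    ∃ G : Group M,
      (∀ x y : M, G.mul x y = dv x (dv e y)) ∧
      G.one = e ∧
      (∀ x : M, G.inv x = dv e x) ∧
      (∀ x y : M, G.mul x (G.inv y) = dv x y) := by
  have h : IsDivisionStructure dv e := ⟨L1, L2, L3⟩
  refine ⟨h.toGroup, fun _ _ => rfl, rfl, fun _ => rfl, fun x y => ?_⟩
  change dv x (dv e (dv e y)) = dv x y
  rw [h.unit_div_unit_div]
end

section
/- Let M be a type, e ∈ M, and T a ternary relation on M such that: (x, x, e) ∈ T and (e, x, x) ∈ T for all x ∈ M; for all x, y ∈ M there exists z with (x, y, z) ∈ T; if (x, y, z) ∈ T and (x, y, z') ∈ T then z = z'; and for all x, y, z there exist a, b, c with (x, y, a) ∈ T, (x, z, b) ∈ T, (y, z, c) ∈ T and (a, b, c) ∈ T. Then there exists a binary operation / on M such that (x, y, z) ∈ T if and only if z = y/x, and the division structure (M, /, e) satisfies L1, L2 and L3 (hence is a group). -/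
theorem exists_forall_iff_eq_of_functional {α β : Type*} {R : α → β → Prop}
    (hex : ∀ a, ∃ b, R a b) (huniq : ∀ a b b', R a b → R a b' → b = b') :
    ∃ f : α → β, ∀ a b, R a b ↔ b = f a := by
  choose f hf using hex
  exact ⟨f, fun a b => ⟨fun h => huniq a b (f a) h (hf a), fun h => h ▸ hf a⟩⟩

/-- A ternary relation `T` on `M` with the listed properties is the graph of
a binary division `(x, y, z) ∈ T ↔ z = y/x`, and the resulting division structure
`(M, /, e)` satisfies L1, L2, L3 (hence is a group). -/
theorem ternary_relation_gives_division {M : Type*} (e : M) (T : M → M → M → Prop)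
    (hTdiag : ∀ x : M, T x x e)
    (hTleft : ∀ x : M, T e x x)
    (hTex : ∀ x y : M, ∃ z : M, T x y z)
    (hTuniq : ∀ x y z z' : M, T x y z → T x y z' → z = z')
    (hTassoc : ∀ x y z : M, ∃ a b c : M, T x y a ∧ T x z b ∧ T y z c ∧ T a b c) :
    ∃ dv : M → M → M,
      (∀ x y z : M, T x y z ↔ z = dv y x) ∧
      (∀ x, dv x x = e) ∧
      (∀ x, dv x e = x) ∧
      (∀ x y z, dv (dv z x) (dv y x) = dv z y) := by
  obtain ⟨f, hf⟩ := exists_forall_iff_eq_of_functional (R := fun (p : M × M) z => T p.1 p.2 z)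
    (fun p => hTex p.1 p.2) (fun p => hTuniq p.1 p.2)
  have hT : ∀ x y z, T x y z ↔ z = f (x, y) := fun x y z => hf (x, y) z
  refine ⟨fun y x => f (x, y), hT, fun x => ((hT _ _ _).1 (hTdiag x)).symm,
    fun x => ((hT _ _ _).1 (hTleft x)).symm, fun x y z => ?_⟩
  obtain ⟨a, b, c, hxya, hxzb, hyzc, habc⟩ := hTassoc x y z
  rw [hT] at hxya hxzb hyzc habc
  subst hxya hxzb hyzc
  exact habc.symm
end

section
/- Let M be a type equipped with a recalage structure (d₀, s₀). Let e ∈ M be the image of the empty tuple under s₀ : M⁰ → M¹, and define x/y := d₀(y, x) using d₀ : M² → M¹. Then the division structure (M, /, e) satisfies L1, L2 and L3; in other words, a recalage of the nerve of the set M endows M with a group structure. -/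
/-!
The face identities `d₀ ∘ dᵢ₊₁ = dᵢ ∘ d₀` allow one to delete from `(x₀, …, xₙ)` every entry
except `x₀` and `xₖ₊₁` before applying `d₀`, so `d₀` acts componentwise:
`d₀ (x₀, …, xₙ) = (x₁/x₀, …, xₙ/x₀)`. Likewise `dₙ₊₁ ∘ s₀ = s₀ ∘ dₙ` and `d₁ ∘ s₀ = id` show
that `s₀` prepends `e`. The laws L1, L2, L3 are then the identities `d₀ ∘ s₁ = s₀ ∘ d₀`,
`d₀ ∘ s₀ = id` and `d₀ ∘ d₀ = d₀ ∘ d₁`, evaluated at `(x)`, `(x)` and `(x, y, z)`.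
-/

/-- Delete the entry at (0-based) position `i` of an `(n+1)`-tuple.
For 1-based position `i+1`, this is the simplicial face map `d_{i+1}`. -/
def del {M : Type*} {n : ℕ} (i : Fin (n + 1)) (x : Fin (n + 1) → M) : Fin n → M :=
  x ∘ i.succAbove

/-- Repeat the entry at (0-based) position `i` of an `n`-tuple.
For 1-based position `i+1`, this is the simplicial degeneracy map `s_{i+1}`. -/
def rep {M : Type*} {n : ℕ} (i : Fin n) (x : Fin n → M) : Fin (n + 1) → M :=
  x ∘ i.predAbove

/-- The extended family of face maps `M^{n+1} → M^n`: index `0` is the extra map `d0`,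
index `i+1` is the deletion of the `(i+1)`-st (1-based) entry. -/
def face {M : Type*} (d0 : ∀ n : ℕ, (Fin (n + 1) → M) → (Fin n → M)) (n : ℕ)
    (i : Fin (n + 2)) : (Fin (n + 1) → M) → (Fin n → M) :=
  Fin.cases (motive := fun _ => (Fin (n + 1) → M) → (Fin n → M)) (d0 n) (fun j => del j) i

/-- The extended family of degeneracy maps `M^n → M^{n+1}`: index `0` is the extra map
`s0`, index `i+1` repeats the `(i+1)`-st (1-based) entry. -/
def degen {M : Type*} (s0 : ∀ n : ℕ, (Fin n → M) → (Fin (n + 1) → M)) (n : ℕ)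
    (i : Fin (n + 1)) : (Fin n → M) → (Fin (n + 1) → M) :=
  Fin.cases (motive := fun _ => (Fin n → M) → (Fin (n + 1) → M)) (s0 n) (fun j => rep j) i

/-- A recalage structure on a type `M`: maps `d0 : M^n → M^{n-1}` and `s0 : M^n → M^{n+1}`
such that, together with the deletion maps `dᵢ` and repetition maps `sᵢ` (`i ≥ 1`), all
the simplicial identities hold. -/
structure Recalage (M : Type*) where
  d0 : ∀ n : ℕ, (Fin (n + 1) → M) → (Fin n → M)
  s0 : ∀ n : ℕ, (Fin n → M) → (Fin (n + 1) → M)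
  dd : ∀ (n i j : ℕ) (hij : i < j) (hj : j ≤ n + 2),
    face d0 n ⟨i, by omega⟩ ∘ face d0 (n + 1) ⟨j, by omega⟩
      = face d0 n ⟨j - 1, by omega⟩ ∘ face d0 (n + 1) ⟨i, by omega⟩
  ds_lt : ∀ (n i j : ℕ) (hij : i < j) (hj : j ≤ n + 1),
    face d0 (n + 1) ⟨i, by omega⟩ ∘ degen s0 (n + 1) ⟨j, by omega⟩
      = degen s0 n ⟨j - 1, by omega⟩ ∘ face d0 n ⟨i, by omega⟩
  ds_self : ∀ (n j : ℕ) (hj : j ≤ n),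
    face d0 n ⟨j, by omega⟩ ∘ degen s0 n ⟨j, by omega⟩ = id
  ds_succ : ∀ (n j : ℕ) (hj : j ≤ n),
    face d0 n ⟨j + 1, by omega⟩ ∘ degen s0 n ⟨j, by omega⟩ = id
  ds_gt : ∀ (n i j : ℕ) (hij : j + 1 < i) (hi : i ≤ n + 2),
    face d0 (n + 1) ⟨i, by omega⟩ ∘ degen s0 (n + 1) ⟨j, by omega⟩
      = degen s0 n ⟨j, by omega⟩ ∘ face d0 n ⟨i - 1, by omega⟩
  ss : ∀ (n i j : ℕ) (hij : i ≤ j) (hj : j ≤ n),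
    degen s0 (n + 1) ⟨i, by omega⟩ ∘ degen s0 n ⟨j, by omega⟩
      = degen s0 (n + 1) ⟨j + 1, by omega⟩ ∘ degen s0 n ⟨i, by omega⟩

namespace Recalage

variable {M : Type*} (R : Recalage M)

def unit : M := R.s0 0 Fin.elim0 0

def div (x y : M) : M := R.d0 1 ![y, x] 0

-- Stated via `by exact`: the `omega` side goals must be solved before the elaborator can unfold
-- `face` on the literal indices to match the statement.
theorem d0_del_succ {n : ℕ} (i : Fin (n + 1)) (x : Fin (n + 2) → M) :
    R.d0 n (del i.succ x) = del i (R.d0 (n + 1) x) := by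
  exact congrFun (R.dd n 0 (i + 2) (by omega) (by omega)) x

theorem d0_d0 {n : ℕ} (x : Fin (n + 2) → M) :
    R.d0 n (R.d0 (n + 1) x) = R.d0 n (del 0 x) := by
  exact (congrFun (R.dd n 0 1 (by omega) (by omega)) x).symm

theorem d0_rep_zero {n : ℕ} (x : Fin (n + 1) → M) :
    R.d0 (n + 1) (rep 0 x) = R.s0 n (R.d0 n x) := by
  exact congrFun (R.ds_lt n 0 1 (by omega) (by omega)) x

theorem d0_s0 {n : ℕ} (x : Fin n → M) : R.d0 n (R.s0 n x) = x := by
  exact congrFun (R.ds_self n 0 (by omega)) x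

theorem del_last_s0 {n : ℕ} (x : Fin (n + 1) → M) :
    del (Fin.last (n + 1)) (R.s0 (n + 1) x) = R.s0 n (del (Fin.last n) x) := by
  exact congrFun (R.ds_gt n (n + 2) 0 (by omega) (by omega)) x

theorem s0_apply_zero {n : ℕ} (x : Fin n → M) : R.s0 n x 0 = R.unit := by
  induction n with
  | zero => rw [Subsingleton.elim x Fin.elim0]; rfl
  | succ n ih =>
    calc R.s0 (n + 1) x 0 = del (Fin.last (n + 1)) (R.s0 (n + 1) x) 0 := rfl
      _ = R.unit := by rw [del_last_s0]; exact ih _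

theorem s0_apply_succ {n : ℕ} (x : Fin n → M) (i : Fin n) : R.s0 n x i.succ = x i := by
  exact congrFun (congrFun (R.ds_succ n 0 (by omega)) x) i

theorem d0_apply {n : ℕ} (x : Fin (n + 2) → M) (k : Fin (n + 1)) :
    R.d0 (n + 1) x k = R.div (x k.succ) (x 0) := by
  induction n with
  | zero =>
    have hx : x = ![x 0, x 1] := by funext i; fin_cases i <;> rfl
    rw [Fin.fin_one_eq_zero k, hx]
    rfl
  | succ n ih =>
    obtain ⟨l, hl⟩ := exists_ne k
    obtain ⟨k, rfl⟩ := Fin.exists_succAbove_eq hl.symm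
    calc R.d0 (n + 2) x (l.succAbove k) = R.d0 (n + 1) (del l.succ x) k := by
          rw [R.d0_del_succ]; rfl
      _ = R.div (x (l.succAbove k).succ) (x 0) := by
          rw [ih]; simp only [del, Function.comp_apply, Fin.succ_succAbove_succ,
            Fin.succ_succAbove_zero]

theorem div_self (x : M) : R.div x x = R.unit := by
  have h := congrFun (R.d0_rep_zero ![x]) 0
  rwa [d0_apply, s0_apply_zero] at h

theorem div_unit (x : M) : R.div x R.unit = x := by
  have h := congrFun (R.d0_s0 ![x]) 0
  rwa [d0_apply, s0_apply_zero, s0_apply_succ] at h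

theorem div_div_div (x y z : M) : R.div (R.div z x) (R.div y x) = R.div z y := by
  have h := congrFun (R.d0_d0 ![x, y, z]) 0
  simpa [d0_apply, del] using h

end Recalage

/-- A recalage structure on `M` endows `M` with a group structure:
with `e := s₀()` (the image of the empty tuple) and `x/y := d₀(y, x)`, the division
structure `(M, /, e)` satisfies L1, L2 and L3. -/
theorem recalage_gives_group {M : Type*} (R : Recalage M) :
    let e : M := R.s0 0 Fin.elim0 0
    let dv : M → M → M := fun x y => R.d0 1 ![y, x] 0
    (∀ x : M, dv x x = e) ∧
    (∀ x : M, dv x e = x) ∧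
    (∀ x y z : M, dv (dv z x) (dv y x) = dv z y) :=
  ⟨R.div_self, R.div_unit, R.div_div_div⟩
end

section
/- Let H be a category equipped with a semitriangulated structure. Given morphisms f : X → Y, g : Y → Z, p : Y → D, q : Z → F and r : Z → E such that (f, p), (g, r) and (g ∘ f, q) are triangles, there exist morphisms u : D → E and v : E → F such that (u, v) is a triangle, u ∘ p = r ∘ g, and v ∘ r = q. -/
open CategoryTheory

/-- A semitriangulated structure on a (nonempty) category `H`: a collection of composable
pairs of morphisms, called triangles, and a collection of objects, called vertices,
subject to axioms S0–S4. -/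
structure Semitriangulated (H : Type*) [Category H] where
  nonempty : Nonempty H
  IsTriangle : ∀ {X Y Z : H}, (X ⟶ Y) → (Y ⟶ Z) → Prop
  IsVertex : H → Prop
  /-- S0: triangles are closed under isomorphism. -/
  S0_triangle : ∀ {X Y Z X' Y' Z' : H} (f : X ⟶ Y) (g : Y ⟶ Z)
      (α : X ≅ X') (β : Y ≅ Y') (γ : Z ≅ Z'),
      IsTriangle f g → IsTriangle (α.inv ≫ f ≫ β.hom) (β.inv ≫ g ≫ γ.hom)
  /-- S0: vertices are closed under isomorphism. -/
  S0_vertex_iso : ∀ {V V' : H}, IsVertex V → (V ≅ V') → IsVertex V'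
  /-- S0: all vertices are isomorphic to each other. -/
  S0_vertex_unique : ∀ {V V' : H}, IsVertex V → IsVertex V' → Nonempty (V ≅ V')
  /-- S1: triangle `(id_X, X → V)` with `V` a vertex. -/
  S1_left : ∀ X : H, ∃ (V : H) (g : X ⟶ V), IsVertex V ∧ IsTriangle (𝟙 X) g
  /-- S1: triangle `(V → X, id_X)` with `V` a vertex. -/
  S1_right : ∀ X : H, ∃ (V : H) (f : V ⟶ X), IsVertex V ∧ IsTriangle f (𝟙 X)
  /-- S2: any morphism fits into a triangle. -/
  S2 : ∀ {X Y : H} (f : X ⟶ Y), ∃ (Z : H) (g : Y ⟶ Z), IsTriangle f g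
  /-- S3: the octahedron-style axiom for a composable pair. -/
  S3 : ∀ {X Y Z : H} (f : X ⟶ Y) (g : Y ⟶ Z),
      ∃ (A B C : H) (a : Y ⟶ A) (b : Z ⟶ B) (c : Z ⟶ C) (p : A ⟶ B) (q : B ⟶ C),
        IsTriangle f a ∧ IsTriangle g b ∧ IsTriangle (f ≫ g) c ∧ IsTriangle p q ∧
        a ≫ p = g ≫ b ∧ b ≫ q = c
  /-- S4: morphisms of partial triangles extend, isomorphically if possible. -/
  S4 : ∀ {A B C D E F : H} (f : A ⟶ B) (g : B ⟶ C) (f' : D ⟶ E) (g' : E ⟶ F)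
      (u : A ⟶ D) (v : B ⟶ E), IsTriangle f g → IsTriangle f' g' →
      f ≫ v = u ≫ f' →
      (∃ w : C ⟶ F, g ≫ w = v ≫ g') ∧
      (IsIso u → IsIso v → ∃ w : C ⟶ F, g ≫ w = v ≫ g' ∧ IsIso w)

/-!
S4 applied to identity maps shows that a triangle `(f, g)` determines the target of `g` up to an
isomorphism under `g`. Transporting the configuration that S3 provides for `(f, g)` along these
isomorphisms onto the given triangles `(f, p)`, `(g, r)`, `(f ≫ g, q)` gives the claim; S0 keeps
the transported `(P, Q)` a triangle.
-/

namespace Semitriangulated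

variable {H : Type*} [Category H] (T : Semitriangulated H)

theorem exists_iso_comp_eq_of_isTriangle {X Y Z Z' : H} {f : X ⟶ Y} {g : Y ⟶ Z} {g' : Y ⟶ Z'}
    (hg : T.IsTriangle f g) (hg' : T.IsTriangle f g') : ∃ e : Z ≅ Z', g ≫ e.hom = g' := by
  obtain ⟨w, hw, _⟩ := (T.S4 f g f g' (𝟙 X) (𝟙 Y) hg hg' (by simp)).2 inferInstance inferInstance
  exact ⟨asIso w, by simpa using hw⟩

end Semitriangulated

/-- the strengthened octahedron in a semitriangulated category: given
triangles `(f, p)`, `(g, r)` and `(g ∘ f, q)`, there exist `u : D ⟶ E` and `v : E ⟶ F`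
such that `(u, v)` is a triangle, `u ∘ p = r ∘ g` and `v ∘ r = q`. -/
theorem semitriangulated_strong_octahedron {H : Type*} [Category H]
    (T : Semitriangulated H) {X Y Z D E F : H}
    (f : X ⟶ Y) (g : Y ⟶ Z) (p : Y ⟶ D) (q : Z ⟶ F) (r : Z ⟶ E)
    (h1 : T.IsTriangle f p) (h2 : T.IsTriangle g r) (h3 : T.IsTriangle (f ≫ g) q) :
    ∃ (u : D ⟶ E) (v : E ⟶ F),
      T.IsTriangle u v ∧ p ≫ u = g ≫ r ∧ r ≫ v = q := by
  obtain ⟨A, B, C, a, b, c, P, Q, ha, hb, hc, hPQ, hab, hbc⟩ := T.S3 f g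
  obtain ⟨eD, hD⟩ := T.exists_iso_comp_eq_of_isTriangle h1 ha
  obtain ⟨eE, hE⟩ := T.exists_iso_comp_eq_of_isTriangle h2 hb
  obtain ⟨eF, hF⟩ := T.exists_iso_comp_eq_of_isTriangle h3 hc
  refine ⟨eD.hom ≫ P ≫ eE.inv, eE.hom ≫ Q ≫ eF.inv,
    T.S0_triangle P Q eD.symm eE.symm eF.symm hPQ, ?_, ?_⟩
  · rw [reassoc_of% hD, reassoc_of% hab, ← hE]
    simp
  · rw [reassoc_of% hE, reassoc_of% hbc, ← hF]
    simp
end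

section
/- Let R be a ring. For every chain map x : C → X of cochain complexes of R-modules, the family Y(x) is a 3-complex: the composite of any three consecutive differentials of Y(x) is zero. -/
/-- A ℤ-indexed family of `R`-modules together with degree `+1` linear maps
(the common underlying datum of `N`-complexes for all `N`). -/
structure ZSys (R : Type) [Ring R] where
  X : ℤ → Type
  [gr : ∀ i, AddCommGroup (X i)]
  [mo : ∀ i, Module R (X i)]
  d : ∀ i : ℤ, X i →ₗ[R] X (i + 1)

attribute [instance] ZSys.gr ZSys.mo

variable {R : Type} [Ring R]

/-- Transport along an equality of degrees. -/
def ZSys.cast (W : ZSys R) {i j : ℤ} (h : i = j) : W.X i →ₗ[R] W.X j := by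
  subst h; exact LinearMap.id

/-- The composite of `k` consecutive differentials, `W.X i →ₗ W.X (i + k)`. -/
def ZSys.dpow (W : ZSys R) : (k : ℕ) → (i : ℤ) → (W.X i →ₗ[R] W.X (i + (k : ℤ)))
  | 0, i => W.cast (by simp)
  | k + 1, i => W.cast (by push_cast; ring) ∘ₗ W.dpow k (i + 1) ∘ₗ W.d i

/-- `W` is an `N`-complex: the composite of any `N` consecutive differentials is zero. -/
def IsNComplex (N : ℕ) (W : ZSys R) : Prop := ∀ i : ℤ, W.dpow N i = 0

/-- A morphism of such systems (in particular, of `N`-complexes): a family of linear maps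
commuting with the differentials. -/
def IsChainMap (V W : ZSys R) (f : ∀ i : ℤ, V.X i →ₗ[R] W.X i) : Prop :=
  ∀ i : ℤ, W.d i ∘ₗ f i = f (i + 1) ∘ₗ V.d i

/-- `h` is a homotopy from `f` to `g` (morphisms of `N`-complexes `V → W`):
`g - f = Σ_{j=1}^{N} d^{N-j} ∘ h ∘ d^{j-1}` in every degree. -/
def IsHomotopy (N : ℕ) (V W : ZSys R) (f g : ∀ i : ℤ, V.X i →ₗ[R] W.X i)
    (h : ∀ i : ℤ, V.X (i + (N : ℤ) - 1) →ₗ[R] W.X i) : Prop :=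
  ∀ i : ℤ, g i - f i =
    ∑ j : Fin N,
      W.cast (show (i + ((j : ℕ) : ℤ) - (N : ℤ) + 1) + ((N - 1 - (j : ℕ) : ℕ) : ℤ) = i by
          have hj := j.isLt; omega) ∘ₗ
        W.dpow (N - 1 - (j : ℕ)) (i + ((j : ℕ) : ℤ) - (N : ℤ) + 1) ∘ₗ
        h (i + ((j : ℕ) : ℤ) - (N : ℤ) + 1) ∘ₗ
        V.cast (show i + ((j : ℕ) : ℤ) = (i + ((j : ℕ) : ℤ) - (N : ℤ) + 1) + (N : ℤ) - 1 by
          ring) ∘ₗ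
        V.dpow (j : ℕ) i

/-- Homotopy equivalence of `N`-complexes `W` and `V`: morphisms `f : W → V` and
`g : V → W` with `g ∘ f` homotopic to `id_W` and `f ∘ g` homotopic to `id_V`. -/
def HomotopyEquivN (N : ℕ) (W V : ZSys R) : Prop :=
  ∃ (f : ∀ i : ℤ, W.X i →ₗ[R] V.X i) (g : ∀ i : ℤ, V.X i →ₗ[R] W.X i),
    IsChainMap W V f ∧ IsChainMap V W g ∧
    (∃ h, IsHomotopy N W W (fun i => g i ∘ₗ f i) (fun _ => LinearMap.id) h) ∧
    (∃ h, IsHomotopy N V V (fun i => f i ∘ₗ g i) (fun _ => LinearMap.id) h)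
/-- The family `Y(x)` associated with a chain map `x : C → X` of cochain complexes:
`Y^{3k} = C^{2k} ⊕ X^{2k}`, `Y^{3k+1} = C^{2k+1} ⊕ X^{2k}`, `Y^{3k+2} = C^{2k+2} ⊕ X^{2k+1}`,
with differentials `[[d,0],[0,1]]`, `[[−d,0],[x,d]]` and `[[−1,0],[x,d]]` respectively. -/
def Ysys (C Xc : ZSys R) (x : ∀ i : ℤ, C.X i →ₗ[R] Xc.X i) : ZSys R where
  X i := C.X (i - i / 3) × Xc.X ((2 * i) / 3)
  gr i := by infer_instance
  mo i := by infer_instance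
  d i :=
    if h0 : i % 3 = 0 then
      -- `[[d, 0], [0, 1]] : C^{2k} ⊕ X^{2k} → C^{2k+1} ⊕ X^{2k}`
      LinearMap.prod
        (C.cast (show i - i / 3 + 1 = (i + 1) - (i + 1) / 3 by omega) ∘ₗ C.d (i - i / 3)
          ∘ₗ LinearMap.fst R (C.X (i - i / 3)) (Xc.X ((2 * i) / 3)))
        (Xc.cast (show (2 * i) / 3 = (2 * (i + 1)) / 3 by omega)
          ∘ₗ LinearMap.snd R (C.X (i - i / 3)) (Xc.X ((2 * i) / 3)))
    else if h1 : i % 3 = 1 then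
      -- `[[−d, 0], [x, d]] : C^{2k+1} ⊕ X^{2k} → C^{2k+2} ⊕ X^{2k+1}`
      LinearMap.prod
        (-(C.cast (show i - i / 3 + 1 = (i + 1) - (i + 1) / 3 by omega) ∘ₗ C.d (i - i / 3)
          ∘ₗ LinearMap.fst R (C.X (i - i / 3)) (Xc.X ((2 * i) / 3))))
        (Xc.cast (show i - i / 3 = (2 * (i + 1)) / 3 by omega) ∘ₗ x (i - i / 3)
            ∘ₗ LinearMap.fst R (C.X (i - i / 3)) (Xc.X ((2 * i) / 3))
          + Xc.cast (show (2 * i) / 3 + 1 = (2 * (i + 1)) / 3 by omega) ∘ₗ Xc.d ((2 * i) / 3)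
            ∘ₗ LinearMap.snd R (C.X (i - i / 3)) (Xc.X ((2 * i) / 3)))
    else
      -- `[[−1, 0], [x, d]] : C^{2k+2} ⊕ X^{2k+1} → C^{2k+2} ⊕ X^{2k+2}`
      LinearMap.prod
        (-(C.cast (show i - i / 3 = (i + 1) - (i + 1) / 3 by omega)
          ∘ₗ LinearMap.fst R (C.X (i - i / 3)) (Xc.X ((2 * i) / 3))))
        (Xc.cast (show i - i / 3 = (2 * (i + 1)) / 3 by omega) ∘ₗ x (i - i / 3)
            ∘ₗ LinearMap.fst R (C.X (i - i / 3)) (Xc.X ((2 * i) / 3))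
          + Xc.cast (show (2 * i) / 3 + 1 = (2 * (i + 1)) / 3 by omega) ∘ₗ Xc.d ((2 * i) / 3)
            ∘ₗ LinearMap.snd R (C.X (i - i / 3)) (Xc.X ((2 * i) / 3)))

/-! The composite of three consecutive differentials of `Y(x)` is computed entrywise, separately
for each residue of the degree mod 3. After moving `x` past `d` by the chain-map identity, each
entry is either a term containing `d ∘ d`, which vanishes in `C` and `X`, or a difference of two
equal terms, made to cancel by the signs `−d` and `−1` in the matrices. -/

namespace ZSys

variable (W : ZSys R)

@[simp] lemma cast_cast {i j k : ℤ} (h₁ : i = j) (h₂ : j = k) (v : W.X i) :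
    W.cast h₂ (W.cast h₁ v) = W.cast (h₁.trans h₂) v := by
  subst h₁ h₂; rfl

@[simp] lemma cast_eq_zero_iff {i j : ℤ} (h : i = j) (v : W.X i) : W.cast h v = 0 ↔ v = 0 := by
  subst h; rfl

lemma d_cast {i j : ℤ} (h : i = j) (v : W.X i) :
    W.d j (W.cast h v) = W.cast (congrArg (· + 1) h) (W.d i v) := by
  subst h; rfl

lemma cast_naturality {V : ZSys R} (f : ∀ i : ℤ, V.X i →ₗ[R] W.X i) {i j : ℤ} (h : i = j)
    (v : V.X i) : f j (V.cast h v) = W.cast h (f i v) := by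
  subst h; rfl

lemma dpow_succ_apply_eq_zero_iff (k : ℕ) (i : ℤ) (v : W.X i) :
    W.dpow (k + 1) i v = 0 ↔ W.dpow k (i + 1) (W.d i v) = 0 := by
  simp [dpow]

lemma dpow_zero_apply_eq_zero_iff (i : ℤ) (v : W.X i) : W.dpow 0 i v = 0 ↔ v = 0 := by
  simp [dpow]

end ZSys

lemma isNComplex_two_iff (W : ZSys R) :
    IsNComplex 2 W ↔ ∀ i (v : W.X i), W.d (i + 1) (W.d i v) = 0 := by
  simp only [IsNComplex, LinearMap.ext_iff, LinearMap.zero_apply,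
    ZSys.dpow_succ_apply_eq_zero_iff, ZSys.dpow_zero_apply_eq_zero_iff]

lemma isNComplex_three_iff (W : ZSys R) :
    IsNComplex 3 W ↔ ∀ i (v : W.X i), W.d (i + 1 + 1) (W.d (i + 1) (W.d i v)) = 0 := by
  simp only [IsNComplex, LinearMap.ext_iff, LinearMap.zero_apply,
    ZSys.dpow_succ_apply_eq_zero_iff, ZSys.dpow_zero_apply_eq_zero_iff]

lemma IsNComplex.d_d_apply {W : ZSys R} (hW : IsNComplex 2 W) (i : ℤ) (v : W.X i) :
    W.d (i + 1) (W.d i v) = 0 :=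
  (isNComplex_two_iff W).1 hW i v

lemma IsChainMap.d_apply {V W : ZSys R} {f : ∀ i : ℤ, V.X i →ₗ[R] W.X i}
    (hf : IsChainMap V W f) (i : ℤ) (v : V.X i) : W.d i (f i v) = f (i + 1) (V.d i v) :=
  LinearMap.congr_fun (hf i) v

section Ysys

variable (C Xc : ZSys R) (x : ∀ i : ℤ, C.X i →ₗ[R] Xc.X i)

lemma Ysys_d_apply_of_emod_eq_zero {i : ℤ} (h : i % 3 = 0) (c : C.X (i - i / 3))
    (w : Xc.X ((2 * i) / 3)) :
    (Ysys C Xc x).d i (c, w) =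
      ((C.cast (by omega) (C.d _ c), Xc.cast (by omega) w) :
        C.X ((i + 1) - (i + 1) / 3) × Xc.X ((2 * (i + 1)) / 3)) := by
  simp only [Ysys, h, reduceDIte]; rfl

lemma Ysys_d_apply_of_emod_eq_one {i : ℤ} (h : i % 3 = 1) (c : C.X (i - i / 3))
    (w : Xc.X ((2 * i) / 3)) :
    (Ysys C Xc x).d i (c, w) =
      ((-C.cast (by omega) (C.d _ c), Xc.cast (by omega) (x _ c) + Xc.cast (by omega) (Xc.d _ w)) :
        C.X ((i + 1) - (i + 1) / 3) × Xc.X ((2 * (i + 1)) / 3)) := by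
  simp only [Ysys, h, reduceDIte, Int.reduceEq]; rfl

lemma Ysys_d_apply_of_emod_eq_two {i : ℤ} (h : i % 3 = 2) (c : C.X (i - i / 3))
    (w : Xc.X ((2 * i) / 3)) :
    (Ysys C Xc x).d i (c, w) =
      ((-C.cast (by omega) c, Xc.cast (by omega) (x _ c) + Xc.cast (by omega) (Xc.d _ w)) :
        C.X ((i + 1) - (i + 1) / 3) × Xc.X ((2 * (i + 1)) / 3)) := by
  simp only [Ysys, h, reduceDIte, Int.reduceEq]; rfl

variable {C Xc x}

lemma Ysys_d_d_d_of_emod_eq_zero (hC : IsNComplex 2 C) (hX : IsNComplex 2 Xc)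
    (hx : IsChainMap C Xc x) {i : ℤ} (h : i % 3 = 0) (c : C.X (i - i / 3))
    (w : Xc.X ((2 * i) / 3)) :
    (Ysys C Xc x).d (i + 1 + 1) ((Ysys C Xc x).d (i + 1) ((Ysys C Xc x).d i (c, w))) = 0 := by
  rw [Ysys_d_apply_of_emod_eq_zero C Xc x h, Ysys_d_apply_of_emod_eq_one C Xc x (by omega),
    Ysys_d_apply_of_emod_eq_two C Xc x (by omega)]
  simp only [ZSys.d_cast, ZSys.cast_naturality, ZSys.cast_cast, hC.d_d_apply, hX.d_d_apply,
    hx.d_apply, map_add, map_zero, neg_zero, add_zero]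
  rfl

lemma Ysys_d_d_d_of_emod_eq_one (hC : IsNComplex 2 C) (hX : IsNComplex 2 Xc)
    (hx : IsChainMap C Xc x) {i : ℤ} (h : i % 3 = 1) (c : C.X (i - i / 3))
    (w : Xc.X ((2 * i) / 3)) :
    (Ysys C Xc x).d (i + 1 + 1) ((Ysys C Xc x).d (i + 1) ((Ysys C Xc x).d i (c, w))) = 0 := by
  rw [Ysys_d_apply_of_emod_eq_one C Xc x h, Ysys_d_apply_of_emod_eq_two C Xc x (by omega),
    Ysys_d_apply_of_emod_eq_zero C Xc x (by omega)]
  simp only [ZSys.d_cast, ZSys.cast_naturality, ZSys.cast_cast, hC.d_d_apply, hX.d_d_apply,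
    hx.d_apply, map_add, map_neg, map_zero, neg_neg, add_zero, neg_add_cancel]
  rfl

lemma Ysys_d_d_d_of_emod_eq_two (hC : IsNComplex 2 C) (hX : IsNComplex 2 Xc)
    (hx : IsChainMap C Xc x) {i : ℤ} (h : i % 3 = 2) (c : C.X (i - i / 3))
    (w : Xc.X ((2 * i) / 3)) :
    (Ysys C Xc x).d (i + 1 + 1) ((Ysys C Xc x).d (i + 1) ((Ysys C Xc x).d i (c, w))) = 0 := by
  rw [Ysys_d_apply_of_emod_eq_two C Xc x h, Ysys_d_apply_of_emod_eq_zero C Xc x (by omega),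
    Ysys_d_apply_of_emod_eq_one C Xc x (by omega)]
  simp only [ZSys.d_cast, ZSys.cast_naturality, ZSys.cast_cast, hC.d_d_apply, hX.d_d_apply,
    hx.d_apply, map_add, map_neg, map_zero, neg_zero, add_zero, neg_add_cancel]
  rfl

end Ysys

/-- for every chain map `x : C → X` of cochain complexes of `R`-modules,
the family `Y(x)` is a 3-complex. -/
theorem Ysys_isThreeComplex (R : Type) [Ring R] (C Xc : ZSys R)
    (hC : IsNComplex 2 C) (hX : IsNComplex 2 Xc)
    (x : ∀ i : ℤ, C.X i →ₗ[R] Xc.X i) (hx : IsChainMap C Xc x) :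
    IsNComplex 3 (Ysys C Xc x) := by
  rw [isNComplex_three_iff]
  rintro i ⟨c, w⟩
  rcases (show i % 3 = 0 ∨ i % 3 = 1 ∨ i % 3 = 2 by omega) with h | h | h
  · exact Ysys_d_d_d_of_emod_eq_zero hC hX hx h c w
  · exact Ysys_d_d_d_of_emod_eq_one hC hX hx h c w
  · exact Ysys_d_d_d_of_emod_eq_two hC hX hx h c w
end

section
/- Let (M, /, e) be a division structure satisfying L1, L2 and L3. Then the operation x * y := x/(e/y) is associative: (x/(e/y))/(e/z) = x/(e/(y/(e/z))) for all x, y, z ∈ M. -/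
namespace DivisionStructure

variable {M : Type*} (dv : M → M → M) (e : M)

theorem e_div_div (L1 : ∀ x, dv x x = e) (L3 : ∀ x y z, dv (dv z x) (dv y x) = dv z y)
    (a b : M) : dv e (dv a b) = dv b a := by
  simpa only [L1] using L3 b a b

theorem div_div_e_div (L2 : ∀ x, dv x e = x) (L3 : ∀ x y z, dv (dv z x) (dv y x) = dv z y)
    (a b : M) : dv (dv a b) (dv e b) = a := by
  rw [L3, L2]

end DivisionStructure

/-- In a division structure satisfying L1, L2 and L3, the operation
`x * y := x/(e/y)` is associative. -/
theorem division_structure_mul_assoc {M : Type*} (dv : M → M → M) (e : M)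
    (L1 : ∀ x, dv x x = e) (L2 : ∀ x, dv x e = x)
    (L3 : ∀ x y z, dv (dv z x) (dv y x) = dv z y) :
    ∀ x y z : M, dv (dv x (dv e y)) (dv e z) = dv x (dv e (dv y (dv e z))) := by
  intro x y z
  calc dv (dv x (dv e y)) (dv e z)
      = dv (dv x (dv e y)) (dv (dv (dv e z) y) (dv e y))
        := by rw [DivisionStructure.div_div_e_div dv e L2 L3]
    _ = dv x (dv (dv e z) y) := L3 _ _ _
    _ = dv x (dv e (dv y (dv e z))) := by rw [DivisionStructure.e_div_div dv e L1 L3]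
end
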